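/- arXiv:1911.08551 — 8 statements merged into one kernel-verified Lean document; each statement's English description precedes it below -/
import Mathlib

section
/- Consider the pf-sLDA single-document posterior: let Z = ∑_{ξ : Fin N → Bool} q(ξ)·L(ξ) and assume Z > 0, and let ν be the probability measure on Δ × (Fin N → Bool) determined by ν(A × {ξ}) = Z⁻¹ ∫_A f(θ) · ∏_{n} (if ξ n then p · a_n(θ) else (1−p) · b_n) dμ(θ) for measurable A ⊆ Δ. Assume moreover that for every vocabulary word v the values β 0 v, …, β (K−1) v are either all zero or not all equal to each other. If ν equals the product of its two marginal measures (i.e., the switches ξ and the topic proportions θ are conditionally independent in the posterior), then for every word position n, either π (w n) = 0 or β k (w n) = 0 for all k. Consequently, if every vocabulary word v appears in the document (∃ n, w n = v), then β k v · π v = 0 for all k and v, i.e., the topics β and the additional topic π have disjoint supports. -/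
open MeasureTheory

set_option maxHeartbeats 1600000 in
/-- Theorem 1 of pf-sLDA: if the channel switches `ξ` and the topic
proportions `θ` are conditionally independent in the single-document
posterior `ν` (i.e. `ν` equals the product of its marginals), and for each
vocabulary word the topic probabilities `β · v` are either all zero or not
all equal, then for every word position `n` either `π (w n) = 0` or
`β k (w n) = 0` for all `k`.  Consequently, if every vocabulary word appears
in the document, `β` and `π` have disjoint supports. -/
theorem pfslda_conditional_independence_disjoint_supports
    (V K N : ℕ) (hV : 1 ≤ V) (hK : 2 ≤ K) (hN : 1 ≤ N)
    (β : Fin K → Fin V → ℝ) (π : Fin V → ℝ)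
    (hβnn : ∀ k v, 0 ≤ β k v) (hβsum : ∀ k, ∑ v, β k v = 1)
    (hπnn : ∀ v, 0 ≤ π v) (hπsum : ∑ v, π v = 1)
    (p : ℝ) (hp : p ∈ Set.Ioo (0 : ℝ) 1)
    (w : Fin N → Fin V)
    (μ : Measure (stdSimplex ℝ (Fin K))) [IsProbabilityMeasure μ]
    [μ.IsOpenPosMeasure]
    (f : stdSimplex ℝ (Fin K) → ℝ) (hf : Continuous f) (hfpos : ∀ θ, 0 < f θ)
    (a : Fin N → stdSimplex ℝ (Fin K) → ℝ)
    (ha : ∀ n θ, a n θ = ∑ k, (θ : Fin K → ℝ) k * β k (w n))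
    (q : (Fin N → Bool) → ℝ)
    (hq : ∀ ξ, q ξ = ∏ n, (if ξ n then p else 1 - p))
    (L : (Fin N → Bool) → ℝ)
    (hL : ∀ ξ, L ξ = ∫ θ, f θ * ∏ n, (if ξ n then a n θ else π (w n)) ∂μ)
    (Z : ℝ) (hZ : Z = ∑ ξ : Fin N → Bool, q ξ * L ξ) (hZpos : 0 < Z)
    (ν : Measure (stdSimplex ℝ (Fin K) × (Fin N → Bool)))
    [IsProbabilityMeasure ν]
    (hν : ∀ (A : Set (stdSimplex ℝ (Fin K))) (ξ : Fin N → Bool),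
      MeasurableSet A →
      ν (A ×ˢ ({ξ} : Set (Fin N → Bool))) =
        ENNReal.ofReal (Z⁻¹ * ∫ θ in A,
          f θ * ∏ n, (if ξ n then p * a n θ else (1 - p) * π (w n)) ∂μ))
    (hβvar : ∀ v : Fin V, (∀ k, β k v = 0) ∨ ¬ (∀ k k', β k v = β k' v))
    (hindep : ν = ν.fst.prod ν.snd) :
    (∀ n, π (w n) = 0 ∨ ∀ k, β k (w n) = 0) ∧
      ((∀ v : Fin V, ∃ n, w n = v) → ∀ k v, β k v * π v = 0) := by
  obtain ⟨hp0, hp1⟩ := hp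
  have hp1' : 0 < 1 - p := by linarith
  have hK0 : (0:ℝ) < (K:ℝ) := by exact_mod_cast (by omega : 0 < K)
  -- continuity of `a m`
  have hacont : ∀ m, Continuous (a m) := by
    intro m
    have : a m = fun θ : stdSimplex ℝ (Fin K) => ∑ k, (θ : Fin K → ℝ) k * β k (w m) :=
      funext (ha m)
    rw [this]
    exact continuous_finset_sum _ fun k _ =>
      ((continuous_apply k).comp continuous_subtype_val).mul continuous_const
  have hann : ∀ m θ, 0 ≤ a m θ := by
    intro m θ
    rw [ha]
    exact Finset.sum_nonneg fun k _ => mul_nonneg (θ.2.1 k) (hβnn _ _)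
  have hapos : ∀ m, ¬ (∀ k, β k (w m) = 0) → ∀ θ : stdSimplex ℝ (Fin K),
      (∀ i, 0 < (θ : Fin K → ℝ) i) → 0 < a m θ := by
    intro m hm θ hθ
    push_neg at hm
    obtain ⟨k0, hk0⟩ := hm
    rw [ha]
    refine Finset.sum_pos' (fun k _ => mul_nonneg (θ.2.1 k) (hβnn _ _)) ?_
    exact ⟨k0, Finset.mem_univ _, mul_pos (hθ k0) (lt_of_le_of_ne (hβnn _ _) (Ne.symm hk0))⟩
  -- nondegeneracy: if π (w m) = 0 then not all β k (w m) vanish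
  have hnondeg : ∀ m, π (w m) = 0 → ¬ (∀ k, β k (w m) = 0) := by
    intro m h0 hall
    have hL0 : ∀ ξ, L ξ = 0 := by
      intro ξ
      rw [hL]
      have hz : (fun θ : stdSimplex ℝ (Fin K) =>
          f θ * ∏ m', (if ξ m' then a m' θ else π (w m'))) = fun _ => 0 := by
        funext θ
        have : (if ξ m then a m θ else π (w m)) = 0 := by
          cases hm : ξ m <;> simp [hm, h0, ha, hall]
        rw [Finset.prod_eq_zero (Finset.mem_univ m) this, mul_zero]
      rw [hz, integral_zero]
    rw [hZ] at hZpos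
    simp [hL0] at hZpos
  -- main claim
  have main : ∀ n, π (w n) = 0 ∨ ∀ k, β k (w n) = 0 := by
    intro n
    rcases hβvar (w n) with hall | hne
    · exact Or.inr hall
    left
    by_contra hb
    have hbpos : 0 < π (w n) := lt_of_le_of_ne (hπnn _) (Ne.symm hb)
    -- switch configurations
    set ξb : Fin N → Bool := fun m => decide (π (w m) = 0) with hξb
    set ξ0 : Fin N → Bool := Function.update ξb n false with hξ0
    set ξ1 : Fin N → Bool := Function.update ξb n true with hξ1
    -- the partial product
    set g : stdSimplex ℝ (Fin K) → ℝ := fun θ =>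
      ∏ m ∈ Finset.univ.erase n, (if ξb m then p * a m θ else (1 - p) * π (w m)) with hg
    have hgc : Continuous g := by
      apply continuous_finset_prod
      intro m _
      by_cases hm : ξb m <;> simp only [hm, if_true, if_false]
      · exact continuous_const.mul (hacont m)
      · exact continuous_const
    have hgnn : ∀ θ, 0 ≤ g θ := by
      intro θ
      apply Finset.prod_nonneg
      intro m _
      by_cases hm : ξb m <;> simp only [hm, if_true, if_false]
      · exact mul_nonneg hp0.le (hann m θ)
      · exact mul_nonneg hp1'.le (hπnn _)
    have hgpos : ∀ θ : stdSimplex ℝ (Fin K), (∀ i, 0 < (θ : Fin K → ℝ) i) → 0 < g θ := by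
      intro θ hθ
      apply Finset.prod_pos
      intro m _
      by_cases hm : ξb m <;> simp only [hm, if_true, if_false]
      · have h0 : π (w m) = 0 := by simpa [hξb] using hm
        exact mul_pos hp0 (hapos m (hnondeg m h0) θ hθ)
      · have h0 : π (w m) ≠ 0 := by simpa [hξb] using hm
        exact mul_pos hp1' (lt_of_le_of_ne (hπnn _) (Ne.symm h0))
    -- product decompositions
    have hprod1 : ∀ θ, (∏ m, (if ξ1 m then p * a m θ else (1 - p) * π (w m)))
        = p * a n θ * g θ := by
      intro θ
      rw [← Finset.mul_prod_erase Finset.univ _ (Finset.mem_univ n)]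
      have h1 : ξ1 n = true := Function.update_self n true ξb
      rw [h1]
      simp only [if_true]
      congr 1
      apply Finset.prod_congr rfl
      intro m hm
      rw [hξ1, Function.update_of_ne (Finset.ne_of_mem_erase hm)]
    have hprod0 : ∀ θ, (∏ m, (if ξ0 m then p * a m θ else (1 - p) * π (w m)))
        = (1 - p) * π (w n) * g θ := by
      intro θ
      rw [← Finset.mul_prod_erase Finset.univ _ (Finset.mem_univ n)]
      have h1 : ξ0 n = false := Function.update_self n false ξb
      rw [h1]
      simp only [Bool.false_eq_true, if_false]
      congr 1
      apply Finset.prod_congr rfl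
      intro m hm
      rw [hξ0, Function.update_of_ne (Finset.ne_of_mem_erase hm)]
    -- the two densities
    set F1 : stdSimplex ℝ (Fin K) → ℝ := fun θ => f θ * (p * a n θ * g θ) with hF1
    set F0 : stdSimplex ℝ (Fin K) → ℝ := fun θ => f θ * ((1 - p) * π (w n) * g θ) with hF0
    have hF1c : Continuous F1 := hf.mul ((continuous_const.mul (hacont n)).mul hgc)
    have hF0c : Continuous F0 := hf.mul (continuous_const.mul hgc)
    have hF1nn : ∀ θ, 0 ≤ F1 θ :=
      fun θ => mul_nonneg (hfpos θ).le
        (mul_nonneg (mul_nonneg hp0.le (hann n θ)) (hgnn θ))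
    have hF0nn : ∀ θ, 0 ≤ F0 θ :=
      fun θ => mul_nonneg (hfpos θ).le
        (mul_nonneg (mul_nonneg hp1'.le (hπnn _)) (hgnn θ))
    have hF1int : Integrable F1 μ :=
      hF1c.integrable_of_hasCompactSupport (IsClosed.isCompact (isClosed_tsupport F1))
    have hF0int : Integrable F0 μ :=
      hF0c.integrable_of_hasCompactSupport (IsClosed.isCompact (isClosed_tsupport F0))
    -- rewrite the measures of rectangles
    have hν1 : ∀ (A : Set (stdSimplex ℝ (Fin K))), MeasurableSet A →
        ν (A ×ˢ ({ξ1} : Set (Fin N → Bool))) = ENNReal.ofReal (Z⁻¹ * ∫ θ in A, F1 θ ∂μ) := by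
      intro A hA
      rw [hν A ξ1 hA]
      congr 2
      exact integral_congr_ae (Filter.Eventually.of_forall fun θ => by
        simp only [hF1]
        rw [hprod1 θ])
    have hν0 : ∀ (A : Set (stdSimplex ℝ (Fin K))), MeasurableSet A →
        ν (A ×ˢ ({ξ0} : Set (Fin N → Bool))) = ENNReal.ofReal (Z⁻¹ * ∫ θ in A, F0 θ ∂μ) := by
      intro A hA
      rw [hν A ξ0 hA]
      congr 2
      exact integral_congr_ae (Filter.Eventually.of_forall fun θ => by
        simp only [hF0]
        rw [hprod0 θ])
    -- independence: cross identity on rectangles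
    have hZinn : 0 ≤ Z⁻¹ := inv_nonneg.mpr hZpos.le
    set J1 : ℝ := ∫ θ, F1 θ ∂μ with hJ1
    set J0 : ℝ := ∫ θ, F0 θ ∂μ with hJ0def
    have hJ1nn : 0 ≤ J1 := integral_nonneg hF1nn
    have hJ0nn : 0 ≤ J0 := integral_nonneg hF0nn
    have hcross : ∀ (A : Set (stdSimplex ℝ (Fin K))), MeasurableSet A →
        (∫ θ in A, F1 θ ∂μ) * J0 = (∫ θ in A, F0 θ ∂μ) * J1 := by
      intro A hA
      have hI1nn : 0 ≤ ∫ θ in A, F1 θ ∂μ := setIntegral_nonneg hA fun θ _ => hF1nn θ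
      have hI0nn : 0 ≤ ∫ θ in A, F0 θ ∂μ := setIntegral_nonneg hA fun θ _ => hF0nn θ
      have hrect : ∀ (S : Set (stdSimplex ℝ (Fin K))) (T : Set (Fin N → Bool)),
          ν (S ×ˢ T) = ν.fst S * ν.snd T := by
        intro S T
        conv_lhs => rw [hindep]
        exact Measure.prod_prod S T
      have hcr : ν (A ×ˢ ({ξ1} : Set (Fin N → Bool))) * ν (Set.univ ×ˢ ({ξ0} : Set (Fin N → Bool)))
          = ν (A ×ˢ ({ξ0} : Set (Fin N → Bool))) * ν (Set.univ ×ˢ ({ξ1} : Set (Fin N → Bool))) := by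
        rw [hrect, hrect, hrect, hrect]
        ring
      rw [hν1 A hA, hν0 A hA, hν1 Set.univ MeasurableSet.univ,
        hν0 Set.univ MeasurableSet.univ, setIntegral_univ, setIntegral_univ,
        ← ENNReal.ofReal_mul (by positivity), ← ENNReal.ofReal_mul (by positivity),
        ENNReal.ofReal_eq_ofReal_iff (by positivity) (by positivity)] at hcr
      have e : ∀ x y : ℝ, (Z⁻¹ * x) * (Z⁻¹ * y) = (Z⁻¹ * Z⁻¹) * (x * y) := fun x y => by ring
      rw [e, e] at hcr
      have hZZ : Z⁻¹ * Z⁻¹ ≠ 0 := by positivity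
      exact mul_left_cancel₀ hZZ hcr
    -- J0 is positive
    have hc0mem : (fun _ : Fin K => (K:ℝ)⁻¹) ∈ stdSimplex ℝ (Fin K) := by
      constructor
      · intro i; positivity
      · simp [Finset.sum_const]
        field_simp
    set c0 : stdSimplex ℝ (Fin K) := ⟨_, hc0mem⟩ with hc0
    have hc0pos : ∀ i, 0 < (c0 : Fin K → ℝ) i := fun i => by
      show (0:ℝ) < (K:ℝ)⁻¹
      positivity
    have hJ0pos : 0 < J0 := by
      rw [hJ0def, integral_pos_iff_support_of_nonneg hF0nn hF0int]
      have hopen : IsOpen {θ : stdSimplex ℝ (Fin K) | 0 < F0 θ} :=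
        isOpen_lt continuous_const hF0c
      have hsub : {θ : stdSimplex ℝ (Fin K) | 0 < F0 θ} ⊆ Function.support F0 :=
        fun θ hθ => ne_of_gt hθ
      have hmem : c0 ∈ {θ : stdSimplex ℝ (Fin K) | 0 < F0 θ} := by
        show 0 < F0 c0
        exact mul_pos (hfpos c0) (mul_pos (mul_pos hp1' hbpos) (hgpos c0 hc0pos))
      calc (0:ENNReal) < μ {θ | 0 < F0 θ} := hopen.measure_pos μ ⟨c0, hmem⟩
        _ ≤ μ (Function.support F0) := measure_mono hsub
    -- the combined density vanishes identically
    set H : stdSimplex ℝ (Fin K) → ℝ := fun θ => F1 θ * J0 - F0 θ * J1 with hH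
    have hHc : Continuous H := (hF1c.mul continuous_const).sub (hF0c.mul continuous_const)
    have hHint : Integrable H μ :=
      hHc.integrable_of_hasCompactSupport (IsClosed.isCompact (isClosed_tsupport H))
    have hH0 : H = 0 := by
      apply (Continuous.ae_eq_iff_eq μ hHc continuous_zero).mp
      apply hHint.ae_eq_zero_of_forall_setIntegral_eq_zero
      intro s hs _
      have : ∫ θ in s, H θ ∂μ
          = (∫ θ in s, F1 θ ∂μ) * J0 - (∫ θ in s, F0 θ ∂μ) * J1 := by
        rw [integral_sub ((hF1int.restrict).mul_const J0) ((hF0int.restrict).mul_const J1),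
          integral_mul_const, integral_mul_const]
      rw [this, hcross s hs, sub_self]
    -- hence a n is constant on interior points
    have key : ∀ θ : stdSimplex ℝ (Fin K), (∀ i, 0 < (θ : Fin K → ℝ) i) →
        p * a n θ * J0 = (1 - p) * π (w n) * J1 := by
      intro θ hθ
      have h := congrFun hH0 θ
      simp only [hH, hF1, hF0, Pi.zero_apply, sub_eq_zero] at h
      have hfg : f θ * g θ ≠ 0 := (mul_pos (hfpos θ) (hgpos θ hθ)).ne'
      apply mul_left_cancel₀ hfg
      linear_combination h
    -- evaluate at the perturbed barycenters
    have hKne : (K:ℝ) ≠ 0 := by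
      have : (0:ℝ) < (K:ℝ) := by exact_mod_cast (by omega : 0 < K)
      exact this.ne'
    have hptmem : ∀ k : Fin K,
        (fun i => (2 * (K:ℝ))⁻¹ + if i = k then (2:ℝ)⁻¹ else 0) ∈ stdSimplex ℝ (Fin K) := by
      intro k
      constructor
      · intro i
        have h1 : (0:ℝ) ≤ (2 * (K:ℝ))⁻¹ := by positivity
        have h2 : (0:ℝ) ≤ if i = k then (2:ℝ)⁻¹ else 0 := by positivity
        linarith
      · rw [Finset.sum_add_distrib, Finset.sum_const, Finset.sum_ite_eq' Finset.univ k]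
        simp only [Finset.mem_univ, if_true, Finset.card_univ, Fintype.card_fin, nsmul_eq_mul]
        field_simp
        ring
    set θpt : Fin K → stdSimplex ℝ (Fin K) := fun k => ⟨_, hptmem k⟩ with hθpt
    have hθptpos : ∀ k i, 0 < ((θpt k : stdSimplex ℝ (Fin K)) : Fin K → ℝ) i := by
      intro k i
      show (0:ℝ) < (2 * (K:ℝ))⁻¹ + if i = k then (2:ℝ)⁻¹ else 0
      have h1 : (0:ℝ) < (2 * (K:ℝ))⁻¹ := by
        have : (0:ℝ) < (K:ℝ) := by exact_mod_cast (by omega : 0 < K)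
        positivity
      have h2 : (0:ℝ) ≤ if i = k then (2:ℝ)⁻¹ else 0 := by positivity
      linarith
    have haval : ∀ k : Fin K, a n (θpt k)
        = (∑ i, (2 * (K:ℝ))⁻¹ * β i (w n)) + 2⁻¹ * β k (w n) := by
      intro k
      rw [ha]
      show (∑ i, ((2 * (K:ℝ))⁻¹ + if i = k then (2:ℝ)⁻¹ else 0) * β i (w n)) = _
      simp only [add_mul, ite_mul, zero_mul]
      rw [Finset.sum_add_distrib, Finset.sum_ite_eq' Finset.univ k]
      simp
    have hPJ : 0 < p * J0 := mul_pos hp0 hJ0pos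
    have hallEq : ∀ k k' : Fin K, β k (w n) = β k' (w n) := by
      intro k k'
      have h1 := key (θpt k) (hθptpos k)
      have h2 := key (θpt k') (hθptpos k')
      rw [haval k] at h1
      rw [haval k'] at h2
      have h3 : (p * J0) * (2⁻¹ * (β k (w n) - β k' (w n))) = 0 := by
        linear_combination h1 - h2
      rcases mul_eq_zero.mp h3 with h4 | h4
      · exact absurd h4 hPJ.ne'
      · linarith
    exact hne hallEq
  refine ⟨main, fun hsurj k v => ?_⟩
  obtain ⟨n, hn⟩ := hsurj v
  rcases main n with h | h
  · rw [← hn, h, mul_zero]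
  · rw [← hn, h k, zero_mul]
end

section
/- In the pf-sLDA single-document setup, assume Z := ∑_{ξ : Fin N → Bool} q(ξ)·L(ξ) > 0 and that every vocabulary word appears in the document (∀ v, ∃ n, w n = v). Then the topics β and the additional topic π have disjoint supports (β k v · π v = 0 for all k and v) if and only if there exists a switch configuration ξ* : Fin N → Bool whose posterior probability is one, i.e., q(ξ*)·L(ξ*) = ∑_ξ q(ξ)·L(ξ). -/
open MeasureTheory Finset

/-!
If every word is exclusive to the topics or to the additional topic, each position is forced onto
one side: any configuration that routes a word to a side giving it probability zero has
likelihood zero, so the posterior sits on a single configuration.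

Conversely, let the posterior be a point mass at `ξ*` and suppose `β k v > 0` and `π v > 0`.
Since `L ξ* > 0`, all factors of the integrand of `ξ*` are positive at some `θ₀`. Flip the switch
at a position `n` carrying `v`. At the midpoint `θ₁` of `θ₀` and the vertex `e_k`, every topic
factor is at least half its value at `θ₀`, the topic factor at `n` is at least `β k v / 2`, and
the background factor `π v` is positive; so the flipped integrand is positive at `θ₁`. As `μ` has
full support, the flipped configuration has positive posterior mass, a contradiction.
-/

theorem eq_zero_of_apply_eq_sum_of_nonneg {α M : Type*} [Fintype α] [AddCommMonoid M]
    [PartialOrder M] [IsOrderedCancelAddMonoid M] {F : α → M} (hF : ∀ x, 0 ≤ F x) {x₀ x : α}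
    (h : F x₀ = ∑ y, F y) (hx : x ≠ x₀) : F x = 0 := by
  classical
  have hle : F x + F x₀ ≤ F x₀ :=
    calc F x + F x₀ = ∑ y ∈ {x, x₀}, F y := (sum_pair hx).symm
      _ ≤ ∑ y, F y := sum_le_univ_sum_of_nonneg hF
      _ = F x₀ := h.symm
  exact le_antisymm (add_le_iff_nonpos_left.1 hle) (hF x)

theorem eq_zero_of_mul_apply_eq_sum {α : Type*} [Fintype α] {q L : α → ℝ} (hq : ∀ x, 0 < q x)
    (hL : ∀ x, 0 ≤ L x) {x₀ x : α} (h : q x₀ * L x₀ = ∑ y, q y * L y) (hx : x ≠ x₀) : L x = 0 :=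
  (mul_eq_zero.1 (eq_zero_of_apply_eq_sum_of_nonneg (fun y => mul_nonneg (hq y).le (hL y)) h
    hx)).resolve_left (hq x).ne'

section SwitchProduct

variable {ι X : Type*} {a : ι → X → ℝ} {b : ι → ℝ}

theorem switch_factor_pos_of_eq_off {ξ ξ' : ι → Bool} {n : ι} {θ₀ θ₁ : X}
    (hpos : ∀ m, 0 < if ξ m then a m θ₀ else b m) (hmono : ∀ m, 0 < a m θ₀ → 0 < a m θ₁)
    (han : 0 < a n θ₁) (hbn : 0 < b n) (hξ' : ∀ m ≠ n, ξ' m = ξ m) (m : ι) :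
    0 < if ξ' m then a m θ₁ else b m := by
  by_cases hm : m = n
  · subst hm
    split <;> assumption
  · have := hpos m
    rw [hξ' m hm]
    split_ifs at this ⊢
    exacts [hmono m this, this]

variable [Fintype ι]

def switchProd (a : ι → X → ℝ) (b : ι → ℝ) (ξ : ι → Bool) (θ : X) : ℝ :=
  ∏ n, if ξ n then a n θ else b n

theorem switchProd_nonneg (ha : ∀ n θ, 0 ≤ a n θ) (hb : ∀ n, 0 ≤ b n) (ξ : ι → Bool) (θ : X) :
    0 ≤ switchProd a b ξ θ :=
  prod_nonneg fun n _ => by split <;> simp only [ha, hb]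

theorem switchProd_pos_iff (ha : ∀ n θ, 0 ≤ a n θ) (hb : ∀ n, 0 ≤ b n) {ξ : ι → Bool} {θ : X} :
    0 < switchProd a b ξ θ ↔ ∀ n, 0 < if ξ n then a n θ else b n := by
  refine ⟨fun h n => ?_, fun h => prod_pos fun n _ => h n⟩
  refine lt_of_le_of_ne (by split <;> simp only [ha, hb]) fun h0 => h.ne' ?_
  exact prod_eq_zero (mem_univ n) h0.symm

theorem continuous_switchProd [TopologicalSpace X] (ha : ∀ n, Continuous (a n))
    (ξ : ι → Bool) : Continuous (switchProd a b ξ) :=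
  continuous_finsetProd _ fun n _ => by split <;> fun_prop

theorem switchProd_eq_zero_of_ne (hexcl : ∀ n, b n ≠ 0 → ∀ θ, a n θ = 0) {ξ : ι → Bool}
    (hξ : ξ ≠ fun n => decide (b n = 0)) (θ : X) : switchProd a b ξ θ = 0 := by
  obtain ⟨n, hn⟩ := Function.ne_iff.1 hξ
  refine prod_eq_zero (mem_univ n) ?_
  by_cases hbn : b n = 0 <;> simp_all

theorem exists_mul_integral_switchProd_eq_sum [DecidableEq ι] [MeasurableSpace X]
    (hexcl : ∀ n, b n ≠ 0 → ∀ θ, a n θ = 0) (q : (ι → Bool) → ℝ) (μ : Measure X) (f : X → ℝ) :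
    ∃ ξ₀, q ξ₀ * ∫ θ, f θ * switchProd a b ξ₀ θ ∂μ =
      ∑ ξ, q ξ * ∫ θ, f θ * switchProd a b ξ θ ∂μ :=
  ⟨fun n => decide (b n = 0),
    (sum_eq_single_of_mem (f := fun ξ => q ξ * ∫ θ, f θ * switchProd a b ξ θ ∂μ) _ (mem_univ _)
      fun _ _ hξ => by simp [switchProd_eq_zero_of_ne hexcl hξ]).symm⟩

end SwitchProduct

theorem exists_mem_stdSimplex_dotProduct_pos {ι κ : Type*} [Fintype κ] [DecidableEq κ]
    {c : ι → κ → ℝ} (hc : ∀ n j, 0 ≤ c n j) {θ : κ → ℝ} (hθ : θ ∈ stdSimplex ℝ κ) (k : κ) :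
    ∃ θ' ∈ stdSimplex ℝ κ, ∀ n, (0 < θ ⬝ᵥ c n ∨ 0 < c n k) → 0 < θ' ⬝ᵥ c n := by
  refine ⟨(1 / 2 : ℝ) • θ + (1 / 2 : ℝ) • Pi.single k 1,
    convex_stdSimplex ℝ κ hθ (single_mem_stdSimplex ℝ k) (by norm_num) (by norm_num)
      (by norm_num), fun n hn => ?_⟩
  have hθc : 0 ≤ θ ⬝ᵥ c n := sum_nonneg fun j _ => mul_nonneg (hθ.1 j) (hc n j)
  rw [add_dotProduct, smul_dotProduct, smul_dotProduct, single_dotProduct, one_mul, smul_eq_mul,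
    smul_eq_mul]
  rcases hn with hn | hn
  · linarith [hc n k]
  · linarith

section TopicMixture

variable {ι κ : Type*} [Fintype κ] {c : ι → κ → ℝ}

def topicMix (c : ι → κ → ℝ) (n : ι) (θ : stdSimplex ℝ κ) : ℝ :=
  (θ : κ → ℝ) ⬝ᵥ c n

theorem topicMix_nonneg (hc : ∀ n j, 0 ≤ c n j) (n : ι) (θ : stdSimplex ℝ κ) :
    0 ≤ topicMix c n θ :=
  sum_nonneg fun j _ => mul_nonneg (θ.2.1 j) (hc n j)

theorem continuous_topicMix (n : ι) : Continuous (topicMix c n) :=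
  continuous_subtype_val.dotProduct continuous_const

theorem integral_switchProd_pos_of_eq_off [Fintype ι] [DecidableEq κ]
    {μ : Measure (stdSimplex ℝ κ)} [IsFiniteMeasure μ] [μ.IsOpenPosMeasure]
    {f : stdSimplex ℝ κ → ℝ} (hf : Continuous f) (hfpos : ∀ θ, 0 < f θ)
    (hc : ∀ n j, 0 ≤ c n j) {b : ι → ℝ} (hb : ∀ n, 0 ≤ b n) {ξ ξ' : ι → Bool} {n : ι} {k : κ}
    (hξ : 0 < ∫ θ, f θ * switchProd (topicMix c) b ξ θ ∂μ)
    (hcn : 0 < c n k) (hbn : 0 < b n) (hξ' : ∀ m ≠ n, ξ' m = ξ m) :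
    0 < ∫ θ, f θ * switchProd (topicMix c) b ξ' θ ∂μ := by
  have ha := topicMix_nonneg hc
  obtain ⟨θ₀, hθ₀⟩ : ∃ θ₀, f θ₀ * switchProd (topicMix c) b ξ θ₀ ≠ 0 := by
    by_contra! h
    simp [h] at hξ
  have hpos₀ := (switchProd_pos_iff ha hb).1
    ((switchProd_nonneg ha hb ξ θ₀).lt_of_ne' (right_ne_zero_of_mul hθ₀))
  obtain ⟨θ₁, hθ₁, hmix⟩ := exists_mem_stdSimplex_dotProduct_pos hc θ₀.2 k
  have hpos₁ : 0 < switchProd (topicMix c) b ξ' ⟨θ₁, hθ₁⟩ :=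
    (switchProd_pos_iff ha hb).2 <| switch_factor_pos_of_eq_off hpos₀
      (fun m hm => hmix m (.inl hm)) (hmix n (.inr hcn)) hbn hξ'
  have hcont : Continuous fun θ => f θ * switchProd (topicMix c) b ξ' θ :=
    hf.mul (continuous_switchProd continuous_topicMix ξ')
  exact integral_pos_of_integrable_nonneg_nonzero hcont
    (hcont.integrable_of_hasCompactSupport (HasCompactSupport.of_compactSpace _))
    (fun θ => mul_nonneg (hfpos θ).le (switchProd_nonneg ha hb ξ' θ))
    (mul_pos (hfpos _) hpos₁).ne'

end TopicMixture

theorem pfslda_disjoint_iff_point_mass_general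
    (V K N : ℕ)
    (β : Fin K → Fin V → ℝ) (π : Fin V → ℝ)
    (hβnn : ∀ k v, 0 ≤ β k v)
    (hπnn : ∀ v, 0 ≤ π v)
    (p : ℝ) (hp : p ∈ Set.Ioo (0 : ℝ) 1)
    (w : Fin N → Fin V)
    (μ : Measure (stdSimplex ℝ (Fin K))) [IsProbabilityMeasure μ]
    [μ.IsOpenPosMeasure]
    (f : stdSimplex ℝ (Fin K) → ℝ) (hf : Continuous f) (hfpos : ∀ θ, 0 < f θ)
    (a : Fin N → stdSimplex ℝ (Fin K) → ℝ)
    (ha : ∀ n θ, a n θ = ∑ k, (θ : Fin K → ℝ) k * β k (w n))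
    (q : (Fin N → Bool) → ℝ)
    (hq : ∀ ξ, q ξ = ∏ n, (if ξ n then p else 1 - p))
    (L : (Fin N → Bool) → ℝ)
    (hL : ∀ ξ, L ξ = ∫ θ, f θ * ∏ n, (if ξ n then a n θ else π (w n)) ∂μ)
    (hZpos : 0 < ∑ ξ : Fin N → Bool, q ξ * L ξ)
    (hall : ∀ v : Fin V, ∃ n, w n = v) :
    (∀ k v, β k v * π v = 0) ↔
      ∃ ξstar : Fin N → Bool,
        q ξstar * L ξstar = ∑ ξ : Fin N → Bool, q ξ * L ξ := by
  obtain rfl : a = topicMix fun n k => β k (w n) := funext₂ ha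
  replace hL : ∀ ξ, L ξ = ∫ θ, f θ * switchProd _ (fun n => π (w n)) ξ θ ∂μ := hL
  constructor
  · intro hdisj
    simp only [hL]
    refine exists_mul_integral_switchProd_eq_sum (fun n hn θ => (ha n θ).trans ?_) q μ f
    exact sum_eq_zero fun k _ => by simp [(mul_eq_zero.1 (hdisj k (w n))).resolve_right hn]
  · rintro ⟨ξstar, hξstar⟩ k v
    by_contra hkv
    obtain ⟨n, rfl⟩ := hall v
    have hβpos : 0 < β k (w n) := (hβnn k (w n)).lt_of_ne' (left_ne_zero_of_mul hkv)
    have hπpos : 0 < π (w n) := (hπnn (w n)).lt_of_ne' (right_ne_zero_of_mul hkv)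
    have hq_pos (ξ : Fin N → Bool) : 0 < q ξ :=
      hq ξ ▸ prod_pos fun n _ => by split <;> linarith [hp.1, hp.2]
    have hL_nonneg (ξ : Fin N → Bool) : 0 ≤ L ξ :=
      hL ξ ▸ integral_nonneg fun θ => mul_nonneg (hfpos θ).le <|
        switchProd_nonneg (topicMix_nonneg fun n k => hβnn k (w n)) (fun n => hπnn (w n)) ξ θ
    have hstar_pos : 0 < L ξstar := pos_of_mul_pos_right (hξstar ▸ hZpos) (hq_pos _).le
    have hflip_zero : L (Function.update ξstar n !ξstar n) = 0 :=
      eq_zero_of_mul_apply_eq_sum hq_pos hL_nonneg hξstar (by simp [Function.update_eq_self_iff])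
    rw [hL] at hflip_zero hstar_pos
    exact (integral_switchProd_pos_of_eq_off hf hfpos (fun n k => hβnn k (w n))
      (fun n => hπnn (w n)) hstar_pos hβpos hπpos fun m hm => Function.update_of_ne hm _ _).ne'
      hflip_zero

/-- Theorem 2 of pf-sLDA: assuming positive total mass and that every
vocabulary word appears in the document, the topics `β` and the additional
topic `π` have disjoint supports iff the posterior over switch configurations
is a point mass at some configuration `ξ*`. -/
theorem pfslda_disjoint_iff_point_mass
    (V K N : ℕ) (hV : 1 ≤ V) (hN : 1 ≤ N)
    (β : Fin K → Fin V → ℝ) (π : Fin V → ℝ)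
    (hβnn : ∀ k v, 0 ≤ β k v) (hβsum : ∀ k, ∑ v, β k v = 1)
    (hπnn : ∀ v, 0 ≤ π v) (hπsum : ∑ v, π v = 1)
    (p : ℝ) (hp : p ∈ Set.Ioo (0 : ℝ) 1)
    (w : Fin N → Fin V)
    (μ : Measure (stdSimplex ℝ (Fin K))) [IsProbabilityMeasure μ]
    [μ.IsOpenPosMeasure]
    (f : stdSimplex ℝ (Fin K) → ℝ) (hf : Continuous f) (hfpos : ∀ θ, 0 < f θ)
    (a : Fin N → stdSimplex ℝ (Fin K) → ℝ)
    (ha : ∀ n θ, a n θ = ∑ k, (θ : Fin K → ℝ) k * β k (w n))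
    (q : (Fin N → Bool) → ℝ)
    (hq : ∀ ξ, q ξ = ∏ n, (if ξ n then p else 1 - p))
    (L : (Fin N → Bool) → ℝ)
    (hL : ∀ ξ, L ξ = ∫ θ, f θ * ∏ n, (if ξ n then a n θ else π (w n)) ∂μ)
    (hZpos : 0 < ∑ ξ : Fin N → Bool, q ξ * L ξ)
    (hall : ∀ v : Fin V, ∃ n, w n = v) :
    (∀ k v, β k v * π v = 0) ↔
      ∃ ξstar : Fin N → Bool,
        q ξstar * L ξstar = ∑ ξ : Fin N → Bool, q ξ * L ξ :=
  pfslda_disjoint_iff_point_mass_general V K N β π hβnn hπnn p hp w μ f hf hfpos a ha q hq L hL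
    hZpos hall
end

section
/- In the pf-sLDA single-document setup, suppose β and π have disjoint supports, i.e., β k v · π v = 0 for all k and v. Define ξ* : Fin N → Bool by ξ* n = true if π (w n) = 0 and ξ* n = false otherwise. Then L(ξ) = 0 for every switch configuration ξ ≠ ξ*; hence if additionally ∑_ξ q(ξ)·L(ξ) > 0, the posterior over switch configurations is a point mass at ξ*: q(ξ*)·L(ξ*) = ∑_ξ q(ξ)·L(ξ). -/
open MeasureTheory

/-- In the pf-sLDA single-document setup, if the topics `β` and the additional
topic `π` have disjoint supports, then defining `ξ* n = true` iff `π (w n) = 0`,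
every other switch configuration has zero likelihood; hence if the total mass
is positive, the posterior over switch configurations is a point mass at `ξ*`. -/
theorem pfslda_disjoint_supports_point_mass
    (V K N : ℕ) (hV : 1 ≤ V) (hN : 1 ≤ N)
    (β : Fin K → Fin V → ℝ) (π : Fin V → ℝ)
    (hβnn : ∀ k v, 0 ≤ β k v) (hβsum : ∀ k, ∑ v, β k v = 1)
    (hπnn : ∀ v, 0 ≤ π v) (hπsum : ∑ v, π v = 1)
    (p : ℝ) (hp : p ∈ Set.Ioo (0 : ℝ) 1)
    (w : Fin N → Fin V)
    (μ : Measure (stdSimplex ℝ (Fin K))) [IsProbabilityMeasure μ]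
    [μ.IsOpenPosMeasure]
    (f : stdSimplex ℝ (Fin K) → ℝ) (hf : Continuous f) (hfpos : ∀ θ, 0 < f θ)
    (a : Fin N → stdSimplex ℝ (Fin K) → ℝ)
    (ha : ∀ n θ, a n θ = ∑ k, (θ : Fin K → ℝ) k * β k (w n))
    (q : (Fin N → Bool) → ℝ)
    (hq : ∀ ξ, q ξ = ∏ n, (if ξ n then p else 1 - p))
    (L : (Fin N → Bool) → ℝ)
    (hL : ∀ ξ, L ξ = ∫ θ, f θ * ∏ n, (if ξ n then a n θ else π (w n)) ∂μ)
    (hdisj : ∀ k v, β k v * π v = 0)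
    (ξstar : Fin N → Bool)
    (hξstar : ∀ n, ξstar n = (if π (w n) = 0 then true else false)) :
    (∀ ξ : Fin N → Bool, ξ ≠ ξstar → L ξ = 0) ∧
      (0 < ∑ ξ : Fin N → Bool, q ξ * L ξ →
        q ξstar * L ξstar = ∑ ξ : Fin N → Bool, q ξ * L ξ) := by
  have hLzero : ∀ ξ : Fin N → Bool, ξ ≠ ξstar → L ξ = 0 := by
    intro ξ hne
    obtain ⟨n, hn⟩ : ∃ n, ξ n ≠ ξstar n := by
      by_contra h; push_neg at h; exact hne (funext h)
    rw [hL]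
    have hzero : ∀ θ, (∏ m, (if ξ m then a m θ else π (w m))) = 0 := by
      intro θ
      apply Finset.prod_eq_zero (Finset.mem_univ n)
      by_cases hx : ξ n
      · have hπ : π (w n) ≠ 0 := by
          intro h0
          have hs := hξstar n
          rw [if_pos h0] at hs
          simp [hx, hs] at hn
        simp only [hx, if_true]
        rw [ha]
        apply Finset.sum_eq_zero
        intro k _
        have hβ : β k (w n) = 0 := by
          rcases mul_eq_zero.mp (hdisj k (w n)) with h | h
          · exact h
          · exact absurd h hπ
        rw [hβ, mul_zero]
      · have hπ : π (w n) = 0 := by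
          by_contra h0
          have hs := hξstar n
          rw [if_neg h0] at hs
          simp [hx, hs] at hn
        simp [hx, hπ]
    simp only [hzero, mul_zero]
    simp
  refine ⟨hLzero, fun _ => ?_⟩
  rw [Finset.sum_eq_single ξstar
    (fun ξ _ hne => by rw [hLzero ξ hne, mul_zero])
    (fun h => absurd (Finset.mem_univ _) h)]
end

section
/- In the pf-sLDA single-document setup, assume there exists ξ* : Fin N → Bool with q(ξ*)·L(ξ*) = ∑_ξ q(ξ)·L(ξ) and ∑_ξ q(ξ)·L(ξ) > 0 (the posterior over switch configurations is a point mass at ξ*). Then for every word position n: if ξ* n = true then π (w n) = 0, and if ξ* n = false then β k (w n) = 0 for all k. In particular, β and π have disjoint supports over the words appearing in the document: β k (w n) · π (w n) = 0 for all k and n. -/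
/-!
As all `q ξ > 0` and `L ξ ≥ 0`, a point mass at `ξ*` forces `L ξ = 0` for every `ξ ≠ ξ*` while
`L ξ* > 0`. Flipping `ξ*` at a single position `n` changes only the `n`-th factor of the integrand;
the product `R` of `f` with the remaining factors is continuous, nonnegative and not identically
zero (otherwise `L ξ* = 0`). As `μ` charges every nonempty open set, `∫ R · (flipped factor) dμ = 0`
makes the flipped factor vanish on the nonempty open set `{R ≠ 0}`. If `ξ* n = true` that factor is
the constant `π (w n)`. If `ξ* n = false` it is `a_n`, the restriction of a linear form to the
convex set `Δ`; vanishing on a nonempty relatively open subset, it vanishes on all of `Δ`, in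
particular at the vertices, which gives `β k (w n) = 0`.
-/

open MeasureTheory Finset Filter Topology

theorem Fintype.prod_apply_update {ι α M : Type*} [Fintype ι] [DecidableEq ι] [CommMonoid M]
    (F : ι → α → M) (ξ : ι → α) (n : ι) (c : α) :
    ∏ i, F i (Function.update ξ n c i) = F n c * ∏ i ∈ univ \ {n}, F i (ξ i) := by
  simp_rw [Function.apply_update F]
  exact prod_update_of_mem (mem_univ n) _ _

theorem Fintype.eq_zero_of_sum_eq_apply_of_nonneg {ι M : Type*} [Fintype ι] [AddCommMonoid M]
    [PartialOrder M] [IsOrderedCancelAddMonoid M] {g : ι → M} (hg : 0 ≤ g)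
    {i₀ : ι} (h : ∑ i, g i = g i₀) {i : ι} (hi : i ≠ i₀) : g i = 0 := by
  classical
  rw [← add_sum_erase _ _ (mem_univ i₀), add_eq_left] at h
  exact (Finset.sum_eq_zero_iff_of_nonneg fun j _ => hg j).1 h i (mem_erase.2 ⟨hi, mem_univ i⟩)

theorem LinearMap.eq_zero_of_mem_convex_of_isOpen {E : Type*} [AddCommGroup E] [Module ℝ E]
    [TopologicalSpace E] [IsTopologicalAddGroup E] [ContinuousSMul ℝ E] {s : Set E}
    (hs : Convex ℝ s) (ℓ : E →ₗ[ℝ] ℝ) {U : Set s} (hU : IsOpen U) (hUne : U.Nonempty)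
    (hℓ : ∀ x ∈ U, ℓ x = 0) {y : E} (hy : y ∈ s) : ℓ y = 0 := by
  obtain ⟨O, hO, rfl⟩ := isOpen_induced_iff.1 hU
  obtain ⟨x, hxO⟩ := hUne
  have hnear : ∀ᶠ t in 𝓝[>] (0 : ℝ), AffineMap.lineMap (x : E) y t ∈ O ∧ t ∈ Set.Ioo 0 1 := by
    have hcont : Continuous (AffineMap.lineMap (x : E) y : ℝ → E) := AffineMap.lineMap_continuous
    have hO' : ∀ᶠ t in 𝓝 (0 : ℝ), AffineMap.lineMap (x : E) y t ∈ O :=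
      hcont.continuousAt.preimage_mem_nhds (by simpa using hO.mem_nhds hxO)
    exact (hO'.filter_mono nhdsWithin_le_nhds).and (Ioo_mem_nhdsGT one_pos)
  obtain ⟨t, htO, ht⟩ := hnear.exists
  have hseg : ℓ (AffineMap.lineMap (x : E) y t) = 0 :=
    hℓ ⟨_, hs.lineMap_mem x.2 hy (Set.Ioo_subset_Icc_self ht)⟩ htO
  rw [AffineMap.lineMap_apply_module, map_add, map_smul, map_smul, hℓ x hxO] at hseg
  simpa [ht.1.ne'] using hseg

theorem stdSimplex.eq_zero_of_sum_mul_eq_zero_on_isOpen {ι : Type*} [Fintype ι] {c : ι → ℝ}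
    {U : Set (stdSimplex ℝ ι)} (hU : IsOpen U) (hUne : U.Nonempty)
    (h : ∀ θ ∈ U, ∑ i, θ i * c i = 0) (i : ι) : c i = 0 := by
  classical
  simpa using (Fintype.linearCombination ℝ c).eq_zero_of_mem_convex_of_isOpen
    (convex_stdSimplex ℝ ι) hU hUne (fun θ hθ => by
      rw [Fintype.linearCombination_apply]; exact h θ hθ) (single_mem_stdSimplex ℝ i)

section SwitchIntegral

variable {X ι : Type*} [TopologicalSpace X] [CompactSpace X] [MeasurableSpace X]
  [OpensMeasurableSpace X] {μ : Measure X} [IsFiniteMeasure μ] [μ.IsOpenPosMeasure]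

theorem Continuous.eq_zero_of_integral_eq_zero_of_nonneg {g : X → ℝ} (hg : Continuous g)
    (hg0 : 0 ≤ g) (h : ∫ x, g x ∂μ = 0) (x : X) : g x = 0 := by
  by_contra hx
  have hint : Integrable g μ := hg.integrable_of_hasCompactSupport (isClosed_tsupport g).isCompact
  exact (integral_pos_of_integrable_nonneg_nonzero hg hint hg0 hx).ne' h

variable [Fintype ι] [DecidableEq ι]

theorem exists_isOpen_flip_factor_eq_zero {f : X → ℝ} {a : ι → X → ℝ} {b : ι → ℝ}
    (hf : Continuous f) (hf0 : 0 ≤ f) (ha : ∀ i, Continuous (a i)) (ha0 : ∀ i θ, 0 ≤ a i θ)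
    (hb0 : ∀ i, 0 ≤ b i) {ξ : ι → Bool} (n : ι)
    (hξ : ∫ θ, f θ * ∏ i, (if ξ i then a i θ else b i) ∂μ ≠ 0)
    (hflip : ∫ θ, f θ * ∏ i, (if Function.update ξ n (!ξ n) i then a i θ else b i) ∂μ = 0) :
    ∃ U : Set X, IsOpen U ∧ U.Nonempty ∧ ∀ θ ∈ U, (if !ξ n then a n θ else b n) = 0 := by
  have hfactor : ∀ i (c : Bool), Continuous (fun θ => if c then a i θ else b i) ∧
      ∀ θ, 0 ≤ if c then a i θ else b i := fun i c => by
    cases c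
    · exact ⟨continuous_const, fun _ => hb0 i⟩
    · exact ⟨ha i, ha0 i⟩
  set R : X → ℝ := fun θ => f θ * ∏ i ∈ univ \ {n}, if ξ i then a i θ else b i
  have hR : Continuous R := hf.mul (continuous_finsetProd _ fun i _ => (hfactor i _).1)
  have hR0 : 0 ≤ R := fun θ => mul_nonneg (hf0 θ) (prod_nonneg fun i _ => (hfactor i _).2 θ)
  have hsplit : ∀ c θ, f θ * ∏ i, (if Function.update ξ n c i then a i θ else b i) =
      R θ * if c then a n θ else b n := fun c θ => by
    rw [Fintype.prod_apply_update (fun i (c : Bool) => if c then a i θ else b i) ξ n c]; ring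
  refine ⟨{θ | R θ ≠ 0}, isOpen_ne_fun hR continuous_const, ?_, fun θ hθ => ?_⟩
  · by_contra hempty
    have hRzero : ∀ θ, R θ = 0 := fun θ => by_contra fun h => hempty ⟨θ, h⟩
    have hstar := hsplit (ξ n)
    simp only [Function.update_eq_self] at hstar
    simp [hstar, hRzero] at hξ
  · have hzero := Continuous.eq_zero_of_integral_eq_zero_of_nonneg
      (g := fun θ => R θ * if !ξ n then a n θ else b n) (hR.mul (hfactor n _).1)
      (fun θ => mul_nonneg (hR0 θ) ((hfactor n _).2 θ)) (by simpa only [hsplit] using hflip) θ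
    exact (mul_eq_zero.1 hzero).resolve_left hθ

end SwitchIntegral

theorem pfslda_point_mass_disjoint_supports_general
    (V K N : ℕ)
    (β : Fin K → Fin V → ℝ) (π : Fin V → ℝ)
    (hβnn : ∀ k v, 0 ≤ β k v)
    (hπnn : ∀ v, 0 ≤ π v)
    (p : ℝ) (hp : p ∈ Set.Ioo (0 : ℝ) 1)
    (w : Fin N → Fin V)
    (μ : Measure (stdSimplex ℝ (Fin K))) [IsProbabilityMeasure μ]
    [μ.IsOpenPosMeasure]
    (f : stdSimplex ℝ (Fin K) → ℝ) (hf : Continuous f) (hfpos : ∀ θ, 0 < f θ)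
    (a : Fin N → stdSimplex ℝ (Fin K) → ℝ)
    (ha : ∀ n θ, a n θ = ∑ k, (θ : Fin K → ℝ) k * β k (w n))
    (q : (Fin N → Bool) → ℝ)
    (hq : ∀ ξ, q ξ = ∏ n, (if ξ n then p else 1 - p))
    (L : (Fin N → Bool) → ℝ)
    (hL : ∀ ξ, L ξ = ∫ θ, f θ * ∏ n, (if ξ n then a n θ else π (w n)) ∂μ)
    (ξstar : Fin N → Bool)
    (hpoint : q ξstar * L ξstar = ∑ ξ : Fin N → Bool, q ξ * L ξ)
    (hZpos : 0 < ∑ ξ : Fin N → Bool, q ξ * L ξ) :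
    (∀ n, (ξstar n = true → π (w n) = 0) ∧
        (ξstar n = false → ∀ k, β k (w n) = 0)) ∧
      (∀ k n, β k (w n) * π (w n) = 0) := by
  have hq0 : ∀ ξ, 0 < q ξ := fun ξ => by
    rw [hq]; exact prod_pos fun n _ => by split <;> linarith [hp.1, hp.2]
  have ha0 : ∀ n θ, 0 ≤ a n θ := fun n θ => by
    rw [ha]; exact sum_nonneg fun k _ => mul_nonneg (θ.2.1 k) (hβnn k (w n))
  have ha_cont : ∀ n, Continuous (a n) := fun n => by
    rw [funext (ha n)]
    exact continuous_finsetSum _ fun k _ =>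
      ((continuous_apply k).comp continuous_subtype_val).mul continuous_const
  have hL0 : ∀ ξ, 0 ≤ L ξ := fun ξ => by
    rw [hL]
    refine integral_nonneg fun θ => mul_nonneg (hfpos θ).le (prod_nonneg fun n _ => ?_)
    split
    exacts [ha0 n θ, hπnn (w n)]
  have hLstar : L ξstar ≠ 0 := fun h => by simp [h] at hpoint; linarith
  have hLflip : ∀ n, L (Function.update ξstar n (!ξstar n)) = 0 := fun n =>
    (mul_eq_zero.1 (Fintype.eq_zero_of_sum_eq_apply_of_nonneg
      (fun ξ => mul_nonneg (hq0 ξ).le (hL0 ξ)) hpoint.symm (by simp))).resolve_left (hq0 _).ne'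
  have hsupp : ∀ n, (ξstar n = true → π (w n) = 0) ∧ (ξstar n = false → ∀ k, β k (w n) = 0) := by
    intro n
    obtain ⟨U, hU, hUne, hzero⟩ := exists_isOpen_flip_factor_eq_zero hf (fun θ => (hfpos θ).le)
      ha_cont ha0 (fun i => hπnn (w i)) n (hL ξstar ▸ hLstar) (hL _ ▸ hLflip n)
    cases hb : ξstar n
    · refine ⟨nofun, fun _ k => ?_⟩
      simp only [hb, Bool.not_false, if_true, ha] at hzero
      exact stdSimplex.eq_zero_of_sum_mul_eq_zero_on_isOpen hU hUne hzero k
    · obtain ⟨θ, hθ⟩ := hUne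
      exact ⟨fun _ => by simpa [hb] using hzero θ hθ, nofun⟩
  refine ⟨hsupp, fun k n => ?_⟩
  cases hb : ξstar n
  · simp [(hsupp n).2 hb k]
  · simp [(hsupp n).1 hb]

/-- In the pf-sLDA single-document setup, if the posterior over switch
configurations is a point mass at `ξ*`, then whenever `ξ* n = true` we have
`π (w n) = 0`, and whenever `ξ* n = false` we have `β k (w n) = 0` for all `k`.
In particular `β` and `π` have disjoint supports over the words appearing in
the document. -/
theorem pfslda_point_mass_disjoint_supports
    (V K N : ℕ) (hV : 1 ≤ V) (hN : 1 ≤ N)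
    (β : Fin K → Fin V → ℝ) (π : Fin V → ℝ)
    (hβnn : ∀ k v, 0 ≤ β k v) (hβsum : ∀ k, ∑ v, β k v = 1)
    (hπnn : ∀ v, 0 ≤ π v) (hπsum : ∑ v, π v = 1)
    (p : ℝ) (hp : p ∈ Set.Ioo (0 : ℝ) 1)
    (w : Fin N → Fin V)
    (μ : Measure (stdSimplex ℝ (Fin K))) [IsProbabilityMeasure μ]
    [μ.IsOpenPosMeasure]
    (f : stdSimplex ℝ (Fin K) → ℝ) (hf : Continuous f) (hfpos : ∀ θ, 0 < f θ)
    (a : Fin N → stdSimplex ℝ (Fin K) → ℝ)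
    (ha : ∀ n θ, a n θ = ∑ k, (θ : Fin K → ℝ) k * β k (w n))
    (q : (Fin N → Bool) → ℝ)
    (hq : ∀ ξ, q ξ = ∏ n, (if ξ n then p else 1 - p))
    (L : (Fin N → Bool) → ℝ)
    (hL : ∀ ξ, L ξ = ∫ θ, f θ * ∏ n, (if ξ n then a n θ else π (w n)) ∂μ)
    (ξstar : Fin N → Bool)
    (hpoint : q ξstar * L ξstar = ∑ ξ : Fin N → Bool, q ξ * L ξ)
    (hZpos : 0 < ∑ ξ : Fin N → Bool, q ξ * L ξ) :
    (∀ n, (ξstar n = true → π (w n) = 0) ∧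
        (ξstar n = false → ∀ k, β k (w n) = 0)) ∧
      (∀ k n, β k (w n) * π (w n) = 0) :=
  pfslda_point_mass_disjoint_supports_general V K N β π hβnn hπnn p hp w μ f hf hfpos a ha q hq L hL
    ξstar hpoint hZpos
end

section
/- Let (Ω, 𝔄) be a measurable space, μ a probability measure on Ω, a : Ω → ℝ a nonnegative integrable function, b ≥ 0 a real number, and p ∈ (0,1). Assume Z := p·∫ a dμ + (1−p)·b > 0, and let ν be the probability measure on Ω × Bool determined by ν(A × {true}) = Z⁻¹ · p · ∫_A a dμ and ν(A × {false}) = Z⁻¹ · (1−p) · b · μ(A) for measurable A. If ν equals the product of its two marginal measures, then either b = 0 or a is μ-almost everywhere equal to the constant ∫ a dμ. -/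
/-!
Under independence, the mass of `A × {true}` times that of `Ω × {false}` equals the mass of
`A × {false}` times that of `Ω × {true}`: both products are `ν₁(A) ν₁(Ω) ν₂(true) ν₂(false)`.
Substituting the given masses, the common factor `Z⁻² p (1 - p) b` cancels when `b ≠ 0`,
leaving `∫_A a dμ = μ(A) ∫ a dμ` for every measurable `A`, so `a` is a.e. constant.
-/

namespace MeasureTheory

theorem Measure.prod_prod_mul_prod_prod_swap {α β : Type*} [MeasurableSpace α]
    [MeasurableSpace β] (μ : Measure α) (ν : Measure β) [SFinite ν] (s s' : Set α)
    (t t' : Set β) :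
    μ.prod ν (s ×ˢ t) * μ.prod ν (s' ×ˢ t') = μ.prod ν (s ×ˢ t') * μ.prod ν (s' ×ˢ t) := by
  simp only [Measure.prod_prod]
  ring

theorem ae_eq_const_of_forall_setIntegral_eq {α E : Type*} [MeasurableSpace α]
    [NormedAddCommGroup E] [NormedSpace ℝ E] [CompleteSpace E] {μ : Measure α}
    [IsFiniteMeasure μ] {f : α → E} (hf : Integrable f μ) (c : E)
    (h : ∀ s, MeasurableSet s → ∫ x in s, f x ∂μ = μ.real s • c) :
    f =ᵐ[μ] fun _ => c :=
  hf.ae_eq_of_forall_setIntegral_eq _ _ (integrable_const c) fun s hs _ => by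
    rw [h s hs, setIntegral_const]

end MeasureTheory

open MeasureTheory

theorem pfslda_single_switch_independence_general
    {Ω : Type*} [MeasurableSpace Ω]
    (μ : Measure Ω) [IsProbabilityMeasure μ]
    (a : Ω → ℝ) (ha_nn : ∀ ω, 0 ≤ a ω) (ha_int : Integrable a μ)
    (b : ℝ) (hb : 0 ≤ b)
    (p : ℝ) (hp : p ∈ Set.Ioo (0 : ℝ) 1)
    (Z : ℝ) (hZpos : 0 < Z)
    (ν : Measure (Ω × Bool)) [IsProbabilityMeasure ν]
    (hν_true : ∀ A : Set Ω, MeasurableSet A →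
      ν (A ×ˢ ({true} : Set Bool)) = ENNReal.ofReal (Z⁻¹ * p * ∫ ω in A, a ω ∂μ))
    (hν_false : ∀ A : Set Ω, MeasurableSet A →
      ν (A ×ˢ ({false} : Set Bool)) = ENNReal.ofReal (Z⁻¹ * (1 - p) * b) * μ A)
    (hindep : ν = ν.fst.prod ν.snd) :
    b = 0 ∨ a =ᵐ[μ] fun _ => ∫ ω, a ω ∂μ := by
  obtain ⟨hp0, hp1⟩ := hp
  rcases hb.eq_or_lt with rfl | hb_pos
  · exact Or.inl rfl
  refine Or.inr (ae_eq_const_of_forall_setIntegral_eq ha_int _ fun A hA => ?_)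
  set r := Z⁻¹ * p
  set s := Z⁻¹ * (1 - p) * b
  have hr : 0 < r := by positivity
  have hs : 0 < s := mul_pos (mul_pos (inv_pos.2 hZpos) (sub_pos.2 hp1)) hb_pos
  have hJ : 0 ≤ ∫ ω in A, a ω ∂μ := setIntegral_nonneg hA fun ω _ => ha_nn ω
  have hI : 0 ≤ ∫ ω, a ω ∂μ := integral_nonneg ha_nn
  have hcross := Measure.prod_prod_mul_prod_prod_swap ν.fst ν.snd A Set.univ {true} {false}
  rw [← hindep, hν_true A hA, hν_false Set.univ .univ, hν_false A hA, hν_true Set.univ .univ,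
    setIntegral_univ, measure_univ, mul_one] at hcross
  have key : r * (∫ ω in A, a ω ∂μ) * s = s * μ.real A * (r * ∫ ω, a ω ∂μ) := by
    rw [← ENNReal.ofReal_eq_ofReal_iff (mul_nonneg (mul_nonneg hr.le hJ) hs.le)
        (mul_nonneg (mul_nonneg hs.le measureReal_nonneg) (mul_nonneg hr.le hI)),
      ENNReal.ofReal_mul (mul_nonneg hr.le hJ),
      ENNReal.ofReal_mul (mul_nonneg hs.le measureReal_nonneg),
      ENNReal.ofReal_mul hs.le, ofReal_measureReal]
    exact hcross
  rw [smul_eq_mul, ← mul_right_inj' (mul_pos hr hs).ne']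
  linear_combination key

/-- Single-word core of Theorem 1's proof: if the posterior joint distribution
of the latent variable `ω` and a single Bernoulli channel switch factors as the
product of its marginals, then either the irrelevant-channel probability `b`
vanishes or the relevant-channel likelihood `a` is `μ`-a.e. constant (equal to
its mean). -/
theorem pfslda_single_switch_independence
    {Ω : Type*} [MeasurableSpace Ω]
    (μ : Measure Ω) [IsProbabilityMeasure μ]
    (a : Ω → ℝ) (ha_nn : ∀ ω, 0 ≤ a ω) (ha_int : Integrable a μ)
    (b : ℝ) (hb : 0 ≤ b)
    (p : ℝ) (hp : p ∈ Set.Ioo (0 : ℝ) 1)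
    (Z : ℝ) (hZ : Z = p * ∫ ω, a ω ∂μ + (1 - p) * b) (hZpos : 0 < Z)
    (ν : Measure (Ω × Bool)) [IsProbabilityMeasure ν]
    (hν_true : ∀ A : Set Ω, MeasurableSet A →
      ν (A ×ˢ ({true} : Set Bool)) = ENNReal.ofReal (Z⁻¹ * p * ∫ ω in A, a ω ∂μ))
    (hν_false : ∀ A : Set Ω, MeasurableSet A →
      ν (A ×ˢ ({false} : Set Bool)) = ENNReal.ofReal (Z⁻¹ * (1 - p) * b) * μ A)
    (hindep : ν = ν.fst.prod ν.snd) :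
    b = 0 ∨ a =ᵐ[μ] fun _ => ∫ ω, a ω ∂μ :=
  pfslda_single_switch_independence_general μ a ha_nn ha_int b hb p hp Z hZpos ν hν_true hν_false
    hindep
end

section
/- Let X be a compact topological space with Borel probability measure μ whose topological support is all of X, let h : X → ℝ be continuous with h > 0, and for each n ∈ Fin N let a_n : X → ℝ be continuous and nonnegative and b_n ≥ 0 a real number. For ξ : Fin N → Bool set L(ξ) := ∫_X h(x) · ∏_n (if ξ n then a_n(x) else b_n) dμ(x). Fix ξ* : Fin N → Bool and suppose L(ξ*) > 0 while L(ξ) = 0 for every ξ that differs from ξ* in exactly one coordinate. Then: (i) for every n with ξ* n = true, b_n = 0; and (ii) for every n with ξ* n = false, a_n vanishes identically on the set U := {x ∈ X : ∏_{m : ξ* m = true} a_m(x) > 0}, which is a nonempty open subset of X. -/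
open MeasureTheory

lemma pfslda_aux_zero_of_integral_zero
    {X : Type*} [TopologicalSpace X] [CompactSpace X]
    [MeasurableSpace X] [BorelSpace X]
    (μ : Measure X) [IsProbabilityMeasure μ] [μ.IsOpenPosMeasure]
    (f : X → ℝ) (hf : Continuous f) (hnn : ∀ x, 0 ≤ f x)
    (hint : ∫ x, f x ∂μ = 0) : ∀ x, f x = 0 := by
  have hi : Integrable f μ :=
    hf.integrable_of_hasCompactSupport (HasCompactSupport.of_compactSpace f)
  have hae : f =ᵐ[μ] 0 := (integral_eq_zero_iff_of_nonneg hnn hi).mp hint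
  have := (Continuous.ae_eq_iff_eq μ hf continuous_const).mp hae
  intro x; exact congrFun this x

/-- Flipped-configuration argument in the reverse direction of Theorem 2:
if the document likelihood `L ξ*` is positive while the likelihood of every
switch configuration differing from `ξ*` in exactly one coordinate vanishes,
then `b n = 0` whenever `ξ* n = true`, and whenever `ξ* n = false` the
relevant-channel likelihood `a n` vanishes identically on the nonempty open
set `U` where the product of the selected relevant-channel likelihoods is
positive. -/
theorem pfslda_one_flip_vanishing
    {X : Type*} [TopologicalSpace X] [CompactSpace X]
    [MeasurableSpace X] [BorelSpace X]
    (μ : Measure X) [IsProbabilityMeasure μ] [μ.IsOpenPosMeasure]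
    (h : X → ℝ) (hh_cont : Continuous h) (hh_pos : ∀ x, 0 < h x)
    (N : ℕ)
    (a : Fin N → X → ℝ)
    (ha_cont : ∀ n, Continuous (a n))
    (ha_nn : ∀ n x, 0 ≤ a n x)
    (b : Fin N → ℝ) (hb : ∀ n, 0 ≤ b n)
    (L : (Fin N → Bool) → ℝ)
    (hL : ∀ ξ, L ξ = ∫ x, h x * ∏ n, (if ξ n then a n x else b n) ∂μ)
    (ξstar : Fin N → Bool)
    (hLstar : 0 < L ξstar)
    (hflip : ∀ n : Fin N, L (Function.update ξstar n (!ξstar n)) = 0)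
    (U : Set X)
    (hU : U = {x : X |
      0 < ∏ m ∈ Finset.univ.filter (fun m => ξstar m = true), a m x}) :
    (∀ n, ξstar n = true → b n = 0) ∧
      (∀ n, ξstar n = false → ∀ x ∈ U, a n x = 0) ∧
      U.Nonempty ∧ IsOpen U := by
  classical
  -- factor functions
  set P : (Fin N → Bool) → X → ℝ := fun ξ x => ∏ n, (if ξ n then a n x else b n) with hP
  set G : Fin N → X → ℝ :=
    fun n x => ∏ m ∈ Finset.univ.erase n, (if ξstar m then a m x else b m) with hG
  have hGnn : ∀ n x, 0 ≤ G n x := by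
    intro n x
    refine Finset.prod_nonneg fun m _ => ?_
    by_cases hm : ξstar m <;> simp [hm, ha_nn, hb]
  have hPnn : ∀ ξ x, 0 ≤ P ξ x := by
    intro ξ x
    refine Finset.prod_nonneg fun m _ => ?_
    by_cases hm : ξ m <;> simp [hm, ha_nn, hb]
  have hPcont : ∀ ξ, Continuous (P ξ) := by
    intro ξ
    refine continuous_finset_prod _ fun m _ => ?_
    by_cases hm : ξ m <;> simp only [hm, if_true, if_false]
    · exact ha_cont m
    · exact continuous_const
  -- split off coordinate n from P ξstar
  have hPstar_split : ∀ n x,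
      P ξstar x = (if ξstar n then a n x else b n) * G n x := by
    intro n x
    exact (Finset.mul_prod_erase Finset.univ _ (Finset.mem_univ n)).symm
  -- the flipped integrand vanishes everywhere
  have key : ∀ n x,
      h x * ((if ξstar n then b n else a n x) * G n x) = 0 := by
    intro n
    have hcont : Continuous
        (fun x => h x * ((if ξstar n then b n else a n x) * G n x)) := by
      refine hh_cont.mul (Continuous.mul ?_ ?_)
      · by_cases hn : ξstar n <;> simp only [hn, if_true, if_false]
        · exact continuous_const
        · exact ha_cont n
      · refine continuous_finset_prod _ fun m _ => ?_
        by_cases hm : ξstar m <;> simp only [hm, if_true, if_false]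
        · exact ha_cont m
        · exact continuous_const
    have hnn : ∀ x, 0 ≤ h x * ((if ξstar n then b n else a n x) * G n x) := by
      intro x
      refine mul_nonneg (hh_pos x).le (mul_nonneg ?_ (hGnn n x))
      by_cases hn : ξstar n <;> simp [hn, ha_nn, hb]
    have hflipP : ∀ x, P (Function.update ξstar n (!ξstar n)) x
        = (if ξstar n then b n else a n x) * G n x := by
      intro x
      show (∏ m, (if Function.update ξstar n (!ξstar n) m then a m x else b m)) = _
      rw [← Finset.mul_prod_erase Finset.univ _ (Finset.mem_univ n)]
      congr 1
      · rw [Function.update_self]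
        by_cases hn : ξstar n <;> simp [hn]
      · refine Finset.prod_congr rfl fun m hm => ?_
        rw [Function.update_of_ne (Finset.ne_of_mem_erase hm)]
    have hint : ∫ x, h x * ((if ξstar n then b n else a n x) * G n x) ∂μ = 0 := by
      have := hflip n
      rw [hL] at this
      rw [← this]
      exact integral_congr_ae (Filter.Eventually.of_forall fun x =>
        congrArg (h x * ·) (hflipP x).symm)
    exact pfslda_aux_zero_of_integral_zero μ _ hcont hnn hint
  -- there is a point where the ξstar integrand is positive
  have hx0 : ∃ x0, 0 < P ξstar x0 := by
    by_contra hcon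
    push_neg at hcon
    have hzero : ∀ x, P ξstar x = 0 := fun x => le_antisymm (hcon x) (hPnn _ x)
    have : L ξstar = 0 := by
      rw [hL]
      have : ∀ x, h x * P ξstar x = (0 : ℝ) := by
        intro x; rw [hzero x, mul_zero]
      simp only [hP] at this
      rw [integral_congr_ae (Filter.Eventually.of_forall this), integral_zero]
    exact absurd this (ne_of_gt hLstar)
  obtain ⟨x0, hx0⟩ := hx0
  -- all b m with ξstar m = false are positive
  have hbpos : ∀ m, ξstar m = false → 0 < b m := by
    intro m hm
    rcases lt_or_eq_of_le (hb m) with hpos | hzero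
    · exact hpos
    · exfalso
      have : P ξstar x0 = 0 := by
        refine Finset.prod_eq_zero (Finset.mem_univ m) ?_
        simp [hm, ← hzero]
      rw [this] at hx0; exact lt_irrefl 0 hx0
  -- part (i)
  have part1 : ∀ n, ξstar n = true → b n = 0 := by
    intro n hn
    by_contra hbn
    have hGzero : ∀ x, G n x = 0 := by
      intro x
      have := key n x
      rw [hn] at this
      simp only [if_true] at this
      have h1 := (hh_pos x).ne'
      rcases mul_eq_zero.mp this with h2 | h2
      · exact absurd h2 h1
      · rcases mul_eq_zero.mp h2 with h3 | h3
        · exact absurd h3 hbn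
        · exact h3
    have : P ξstar x0 = 0 := by
      rw [hPstar_split n x0, hGzero x0, mul_zero]
    rw [this] at hx0; exact lt_irrefl 0 hx0
  -- each selected a m is positive on U
  have hUfac : ∀ x ∈ U, ∀ m, ξstar m = true → 0 < a m x := by
    intro x hx m hm
    rw [hU] at hx
    have hxlt : 0 < ∏ m ∈ Finset.univ.filter (fun m => ξstar m = true), a m x := hx
    rcases lt_or_eq_of_le (ha_nn m x) with hpos | hzero
    · exact hpos
    · exfalso
      have : ∏ m ∈ Finset.univ.filter (fun m => ξstar m = true), a m x = 0 := by
        refine Finset.prod_eq_zero (Finset.mem_filter.mpr ⟨Finset.mem_univ m, hm⟩) hzero.symm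
      rw [this] at hxlt; exact lt_irrefl 0 hxlt
  -- part (ii)
  have part2 : ∀ n, ξstar n = false → ∀ x ∈ U, a n x = 0 := by
    intro n hn x hx
    have hGpos : 0 < G n x := by
      refine Finset.prod_pos fun m hm => ?_
      by_cases hms : ξstar m
      · simp only [hms, if_true]
        exact hUfac x hx m hms
      · simp only [hms, if_false]
        exact hbpos m (Bool.not_eq_true _ ▸ (by simpa using hms))
    have := key n x
    rw [hn] at this
    simp only [Bool.false_eq_true, if_false] at this
    have h1 := (hh_pos x).ne'
    rcases mul_eq_zero.mp this with h2 | h2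
    · exact absurd h2 h1
    · rcases mul_eq_zero.mp h2 with h3 | h3
      · exact h3
      · exact absurd h3 hGpos.ne'
  -- U nonempty
  have hUne : U.Nonempty := by
    refine ⟨x0, ?_⟩
    rw [hU]
    show 0 < ∏ m ∈ Finset.univ.filter (fun m => ξstar m = true), a m x0
    have hsplit := Finset.prod_filter_mul_prod_filter_not Finset.univ
      (fun m => ξstar m = true) (fun m => if ξstar m then a m x0 else b m)
    have hPx0 : P ξstar x0 =
        (∏ m ∈ Finset.univ.filter (fun m => ξstar m = true), a m x0) *
        (∏ m ∈ Finset.univ.filter (fun m => ¬ ξstar m = true), b m) := by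
      show (∏ m, (if ξstar m then a m x0 else b m)) = _
      rw [← hsplit]
      congr 1
      · refine Finset.prod_congr rfl fun m hm => ?_
        have := (Finset.mem_filter.mp hm).2
        simp [this]
      · refine Finset.prod_congr rfl fun m hm => ?_
        have := (Finset.mem_filter.mp hm).2
        simp [this]
    rcases lt_or_eq_of_le (Finset.prod_nonneg
        (fun m (_ : m ∈ Finset.univ.filter (fun m => ξstar m = true)) => ha_nn m x0)) with
      hpos | hzero
    · exact hpos
    · exfalso
      rw [hPx0, ← hzero, zero_mul] at hx0
      exact lt_irrefl 0 hx0
  -- U open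
  have hUopen : IsOpen U := by
    rw [hU]
    exact isOpen_lt continuous_const
      (continuous_finset_prod _ fun m _ => ha_cont m)
  exact ⟨part1, part2, hUne, hUopen⟩
end

section
/- In the pf-sLDA single-document setup, suppose each a_n : Δ → ℝ is continuous with a_n(θ) > 0 for all θ ∈ Δ, each b_n > 0, and r : (Fin N → Bool) → ℝ satisfies r(ξ) > 0 for all ξ. Then the joint log likelihood satisfies the lower bound log(∑_ξ q(ξ) · r(ξ) · L₀(ξ)) ≥ ∑_ξ q(ξ) · log r(ξ) + p · ∑_n ∫_Δ log a_n(θ) dμ(θ) + (1−p) · ∑_n log b_n. -/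
/-!
Jensen's inequality for the concave logarithm, applied twice. Over the switches, it bounds
`log ∑_ξ q(ξ) r(ξ) L₀(ξ)` below by `∑_ξ q(ξ) (log r(ξ) + log L₀(ξ))`. Over the topic proportions,
it bounds `log L₀(ξ)` below by `∫ log ∏_n (ξ-selected factor) dμ`, i.e. by the sum of the
expected log-likelihoods of the selected channels. Averaging this additive bound over the
product prior `q` leaves each word in the relevant channel with weight `p` and in the
irrelevant one with weight `1 - p`.
-/

open MeasureTheory Finset

theorem sum_mul_log_le_log_sum_mul {ι : Type*} (s : Finset ι) {w x : ι → ℝ}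
    (hw : ∀ i ∈ s, 0 ≤ w i) (hw1 : ∑ i ∈ s, w i = 1) (hx : ∀ i ∈ s, 0 < x i) :
    ∑ i ∈ s, w i * Real.log (x i) ≤ Real.log (∑ i ∈ s, w i * x i) := by
  simpa only [smul_eq_mul] using strictConcaveOn_log_Ioi.concaveOn.le_map_sum hw hw1 hx

theorem sum_mul_log_add_le_log_sum_mul_mul {ι : Type*} (s : Finset ι) {q r L B : ι → ℝ}
    (hq : ∀ i ∈ s, 0 ≤ q i) (hq1 : ∑ i ∈ s, q i = 1) (hr : ∀ i ∈ s, 0 < r i)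
    (hL : ∀ i ∈ s, 0 < L i) (hB : ∀ i ∈ s, B i ≤ Real.log (L i)) :
    ∑ i ∈ s, q i * Real.log (r i) + ∑ i ∈ s, q i * B i ≤ Real.log (∑ i ∈ s, q i * r i * L i) :=
  calc ∑ i ∈ s, q i * Real.log (r i) + ∑ i ∈ s, q i * B i
      ≤ ∑ i ∈ s, q i * Real.log (r i) + ∑ i ∈ s, q i * Real.log (L i) := by
        gcongr with i hi
        exacts [hq i hi, hB i hi]
    _ = ∑ i ∈ s, q i * Real.log (r i * L i) := by
        rw [← sum_add_distrib]
        refine sum_congr rfl fun i hi => ?_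
        rw [Real.log_mul (hr i hi).ne' (hL i hi).ne', mul_add]
    _ ≤ Real.log (∑ i ∈ s, q i * r i * L i) := by
        simpa only [mul_assoc] using
          sum_mul_log_le_log_sum_mul s hq hq1 fun i hi => mul_pos (hr i hi) (hL i hi)

theorem integral_pos_of_forall_pos {X : Type*} [MeasurableSpace X] {μ : Measure X} [NeZero μ]
    {g : X → ℝ} (hg : Integrable g μ) (hpos : ∀ x, 0 < g x) : 0 < ∫ x, g x ∂μ := by
  rw [integral_pos_iff_support_of_nonneg (fun x => (hpos x).le) hg,
    Set.eq_univ_of_forall fun x => Function.mem_support.mpr (hpos x).ne']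
  exact Measure.measure_univ_pos.mpr (NeZero.ne μ)

theorem integral_log_le_log_integral {X : Type*} [MeasurableSpace X] {μ : Measure X}
    [IsProbabilityMeasure μ] {g : X → ℝ} (hg : Integrable g μ)
    (hlog : Integrable (fun x => Real.log (g x)) μ) (hpos : ∀ x, 0 < g x) :
    ∫ x, Real.log (g x) ∂μ ≤ Real.log (∫ x, g x ∂μ) := by
  set C := ∫ x, g x ∂μ
  have hC : 0 < C := integral_pos_of_forall_pos hg hpos
  -- the tangent line of `log` at `C`
  have tangent : ∀ x, Real.log (g x) ≤ g x / C + (Real.log C - 1) := fun x => by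
    have := Real.log_le_sub_one_of_pos (div_pos (hpos x) hC)
    rw [Real.log_div (hpos x).ne' hC.ne'] at this
    linarith
  calc ∫ x, Real.log (g x) ∂μ
      ≤ ∫ x, g x / C + (Real.log C - 1) ∂μ :=
        integral_mono hlog ((hg.div_const C).add (integrable_const _)) tangent
    _ = Real.log C := by
        rw [integral_add (hg.div_const C) (integrable_const _), integral_div, integral_const,
          probReal_univ, one_smul, div_self hC.ne']
        ring

theorem sum_integral_log_le_log_integral_prod {X ι : Type*} [MeasurableSpace X] {μ : Measure X}
    [IsProbabilityMeasure μ] (s : Finset ι) {f : ι → X → ℝ}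
    (hlog : ∀ i ∈ s, Integrable (fun x => Real.log (f i x)) μ)
    (hprod : Integrable (fun x => ∏ i ∈ s, f i x) μ) (hpos : ∀ i ∈ s, ∀ x, 0 < f i x) :
    ∑ i ∈ s, ∫ x, Real.log (f i x) ∂μ ≤ Real.log (∫ x, ∏ i ∈ s, f i x ∂μ) := by
  have log_prod (x : X) : Real.log (∏ i ∈ s, f i x) = ∑ i ∈ s, Real.log (f i x) :=
    Real.log_prod fun i hi => (hpos i hi x).ne'
  calc ∑ i ∈ s, ∫ x, Real.log (f i x) ∂μ
      = ∫ x, Real.log (∏ i ∈ s, f i x) ∂μ := by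
        simp_rw [log_prod]
        exact (integral_finsetSum s hlog).symm
    _ ≤ Real.log (∫ x, ∏ i ∈ s, f i x ∂μ) := by
        refine integral_log_le_log_integral hprod ?_ fun x => prod_pos fun i hi => hpos i hi x
        simp_rw [log_prod]
        exact integrable_finsetSum s hlog

section ProductWeights

variable {ι α : Type*} [Fintype ι] [DecidableEq ι] [Fintype α] {w : ι → α → ℝ}

theorem sum_prod_eq_one (hw : ∀ i, ∑ c, w i c = 1) : ∑ ξ : ι → α, ∏ i, w i (ξ i) = 1 := by
  rw [← Fintype.prod_sum]
  simp [hw]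

theorem sum_prod_mul_apply (hw : ∀ i, ∑ c, w i c = 1) (j : ι) (h : α → ℝ) :
    ∑ ξ : ι → α, (∏ i, w i (ξ i)) * h (ξ j) = ∑ c, w j c * h c := by
  calc ∑ ξ : ι → α, (∏ i, w i (ξ i)) * h (ξ j)
      = ∑ ξ : ι → α, ∏ i, w i (ξ i) * (if i = j then h (ξ i) else 1) := by
        refine sum_congr rfl fun ξ _ => ?_
        rw [prod_mul_distrib, Fintype.prod_ite_eq']
    _ = ∏ i, ∑ c, w i c * (if i = j then h c else 1) :=
        (Fintype.prod_sum fun i c => w i c * if i = j then h c else 1).symm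
    _ = ∑ c, w j c * h c := by
        rw [Fintype.prod_eq_single j fun i hi => by simp [hi, hw]]
        simp

theorem sum_prod_mul_sum_apply (hw : ∀ i, ∑ c, w i c = 1) (h : ι → α → ℝ) :
    ∑ ξ : ι → α, (∏ i, w i (ξ i)) * ∑ j, h j (ξ j) = ∑ j, ∑ c, w j c * h j c := by
  simp_rw [mul_sum]
  rw [sum_comm]
  exact sum_congr rfl fun j _ => sum_prod_mul_apply hw j (h j)

end ProductWeights

/-- Equation (1) of the pf-sLDA paper: the joint log likelihood
`log p(y, w) = log ∑_ξ q(ξ) r(ξ) L₀(ξ)` is lower-bounded by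
`E_ξ[log p(y|w,ξ)] + p · E_θ[log p_β(w|θ)] + (1-p) · log p_π(w)`. -/
theorem pfslda_log_likelihood_lower_bound
    (K N : ℕ)
    (μ : Measure (stdSimplex ℝ (Fin K))) [IsProbabilityMeasure μ]
    (p : ℝ) (hp : p ∈ Set.Ioo (0 : ℝ) 1)
    (a : Fin N → stdSimplex ℝ (Fin K) → ℝ)
    (ha_cont : ∀ n, Continuous (a n))
    (ha_pos : ∀ n θ, 0 < a n θ)
    (b : Fin N → ℝ) (hb : ∀ n, 0 < b n)
    (r : (Fin N → Bool) → ℝ) (hr : ∀ ξ, 0 < r ξ)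
    (q : (Fin N → Bool) → ℝ)
    (hq : ∀ ξ, q ξ = ∏ n, (if ξ n then p else 1 - p))
    (L₀ : (Fin N → Bool) → ℝ)
    (hL₀ : ∀ ξ, L₀ ξ = ∫ θ, ∏ n, (if ξ n then a n θ else b n) ∂μ) :
    Real.log (∑ ξ : Fin N → Bool, q ξ * r ξ * L₀ ξ) ≥
      (∑ ξ : Fin N → Bool, q ξ * Real.log (r ξ)) +
        p * ∑ n, ∫ θ, Real.log (a n θ) ∂μ +
        (1 - p) * ∑ n, Real.log (b n) := by
  obtain ⟨hp0, hp1⟩ := hp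
  have integrable {h : stdSimplex ℝ (Fin K) → ℝ} (hh : Continuous h) : Integrable h μ :=
    hh.integrable_of_hasCompactSupport (HasCompactSupport.of_compactSpace h)
  let f (ξ : Fin N → Bool) (n : Fin N) (θ : stdSimplex ℝ (Fin K)) : ℝ :=
    if ξ n then a n θ else b n
  have hf_pos ξ n θ : 0 < f ξ n θ := by
    unfold f; split
    exacts [ha_pos n θ, hb n]
  have hf_cont ξ n : Continuous (f ξ n) := by
    unfold f; split
    exacts [ha_cont n, continuous_const]
  have hprod_int ξ : Integrable (fun θ => ∏ n, f ξ n θ) μ :=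
    integrable (continuous_finsetProd _ fun n _ => hf_cont ξ n)
  have hL₀_pos ξ : 0 < L₀ ξ :=
    hL₀ ξ ▸ integral_pos_of_forall_pos (hprod_int ξ) fun θ => prod_pos fun n _ => hf_pos ξ n θ
  let E (n : Fin N) (c : Bool) : ℝ := if c then ∫ θ, Real.log (a n θ) ∂μ else Real.log (b n)
  have hlogL₀ ξ : ∑ n, E n (ξ n) ≤ Real.log (L₀ ξ) := by
    rw [hL₀ ξ]
    convert sum_integral_log_le_log_integral_prod univ
      (fun n _ => integrable ((hf_cont ξ n).log fun θ => (hf_pos ξ n θ).ne')) (hprod_int ξ)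
      (fun n _ => hf_pos ξ n) using 2 with n
    unfold f E; split <;> simp
  let w (_ : Fin N) (c : Bool) : ℝ := if c then p else 1 - p
  have hw n : ∑ c, w n c = 1 := by simp [w]
  have hq_nonneg ξ : 0 ≤ q ξ := hq ξ ▸ prod_nonneg fun n _ => by split <;> linarith
  have hq_sum : ∑ ξ, q ξ = 1 := by simp_rw [hq]; exact sum_prod_eq_one hw
  have marginal : ∑ ξ, q ξ * ∑ n, E n (ξ n)
      = p * ∑ n, ∫ θ, Real.log (a n θ) ∂μ + (1 - p) * ∑ n, Real.log (b n) := by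
    simp_rw [hq]
    refine (sum_prod_mul_sum_apply hw E).trans ?_
    simp [w, E, sum_add_distrib, mul_sum]
  rw [ge_iff_le, add_assoc, ← marginal]
  exact sum_mul_log_add_le_log_sum_mul_mul univ (fun ξ _ => hq_nonneg ξ) hq_sum
    (fun ξ _ => hr ξ) (fun ξ _ => hL₀_pos ξ) fun ξ _ => hlogL₀ ξ
end

section
/- In the pf-sLDA single-document setup, fix ξ* : Fin N → Bool and suppose the channels are disjoint relative to ξ*: for every n with ξ* n = true, b_n = 0 and a_n is continuous with a_n(θ) > 0 for all θ ∈ Δ; for every n with ξ* n = false, b_n > 0 and a_n(θ) = 0 for all θ ∈ Δ. Suppose also r(ξ) ≥ 0 for all ξ and r(ξ*) > 0. Then the joint likelihood collapses to the single configuration ξ*, namely ∑_ξ q(ξ)·r(ξ)·L₀(ξ) = q(ξ*)·r(ξ*)·L₀(ξ*), and it satisfies the lower bound log(∑_ξ q(ξ)·r(ξ)·L₀(ξ)) ≥ log r(ξ*) + ∑_{n : ξ* n = true} ∫_Δ log a_n(θ) dμ(θ) + ∑_{n : ξ* n = false} log b_n + log q(ξ*). -/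
/-!
Every configuration `ξ ≠ ξ*` puts some word in a channel where its likelihood vanishes
(`b n = 0` where `ξ* n` holds, `a n = 0` where it fails), so the integrand of `L₀ ξ` is
identically zero and the sum collapses to the term of `ξ*`. There the integrand factors as
`(∏_{ξ* n} a n θ) * ∏_{¬ξ* n} b n`, and Jensen's inequality for the concave `log`,
`∫ log f ≤ log ∫ f`, applied to the continuous positive product gives the bound.
-/

open MeasureTheory Real

lemma integral_pos_of_ae_pos {α : Type*} [MeasurableSpace α] {μ : Measure α} [NeZero μ]
    {f : α → ℝ} (hf : ∀ᵐ x ∂μ, 0 < f x) (hfi : Integrable f μ) : 0 < ∫ x, f x ∂μ := by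
  have hf₀ : 0 ≤ᵐ[μ] f := hf.mono fun _ hx => hx.le
  refine (integral_nonneg_of_ae hf₀).lt_of_ne fun h => ?_
  obtain ⟨x, hx, hx₀⟩ := (hf.and ((integral_eq_zero_iff_of_nonneg_ae hf₀ hfi).1 h.symm)).exists
  exact hx.ne' hx₀

lemma integral_log_le_log_integral_s9 {α : Type*} [MeasurableSpace α] {μ : Measure α}
    [IsProbabilityMeasure μ] {f : α → ℝ} (hf : ∀ᵐ x ∂μ, 0 < f x) (hfi : Integrable f μ)
    (hlogi : Integrable (fun x => log (f x)) μ) :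
    ∫ x, log (f x) ∂μ ≤ log (∫ x, f x ∂μ) := by
  set m := ∫ x, f x ∂μ
  have hm : 0 < m := integral_pos_of_ae_pos hf hfi
  -- tangent line of the concave function `log` at `m`
  have htangent : ∀ᵐ x ∂μ, log (f x) ≤ f x / m + (log m - 1) := hf.mono fun x hx => by
    have := log_le_sub_one_of_pos (div_pos hx hm)
    rw [log_div hx.ne' hm.ne'] at this
    linarith
  calc ∫ x, log (f x) ∂μ ≤ ∫ x, (f x / m + (log m - 1)) ∂μ :=
        integral_mono_ae hlogi ((hfi.div_const m).add (integrable_const _)) htangent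
    _ = log m := by
        rw [integral_add (hfi.div_const m) (integrable_const _), integral_div, integral_const,
          probReal_univ, one_smul, div_self hm.ne']
        ring

section CompactSpace

variable {α : Type*} [TopologicalSpace α] [CompactSpace α] [MeasurableSpace α]
  [OpensMeasurableSpace α] {μ : Measure α}

lemma Continuous.integral_pos_of_forall_pos [IsFiniteMeasure μ] [NeZero μ] {f : α → ℝ}
    (hf : Continuous f) (hpos : ∀ x, 0 < f x) : 0 < ∫ x, f x ∂μ :=
  integral_pos_of_ae_pos (.of_forall hpos)
    (hf.integrable_of_hasCompactSupport (.of_compactSpace f))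

lemma sum_integral_log_le_log_integral_prod_s9 [IsProbabilityMeasure μ] {ι : Type*}
    {s : Finset ι} {f : ι → α → ℝ} (hfc : ∀ i ∈ s, Continuous (f i))
    (hfpos : ∀ i ∈ s, ∀ x, 0 < f i x) :
    ∑ i ∈ s, ∫ x, log (f i x) ∂μ ≤ log (∫ x, ∏ i ∈ s, f i x ∂μ) := by
  have hlogi : ∀ i ∈ s, Integrable (fun x => log (f i x)) μ := fun i hi =>
    ((hfc i hi).log fun x => (hfpos i hi x).ne').integrable_of_hasCompactSupport
      (.of_compactSpace _)
  have hprod_c : Continuous fun x => ∏ i ∈ s, f i x := continuous_finsetProd s hfc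
  have hprod_pos : ∀ x, 0 < ∏ i ∈ s, f i x := fun x => Finset.prod_pos fun i hi => hfpos i hi x
  rw [← integral_finsetSum s hlogi]
  calc ∫ x, ∑ i ∈ s, log (f i x) ∂μ = ∫ x, log (∏ i ∈ s, f i x) ∂μ := by
        congr with x
        exact (log_prod fun i hi => (hfpos i hi x).ne').symm
    _ ≤ _ := integral_log_le_log_integral_s9 (.of_forall hprod_pos)
        (hprod_c.integrable_of_hasCompactSupport (.of_compactSpace _))
        ((hprod_c.log fun x => (hprod_pos x).ne').integrable_of_hasCompactSupport
          (.of_compactSpace _))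

end CompactSpace

lemma prod_ite_eq_zero_of_ne {ι M : Type*} [Fintype ι] [CommMonoidWithZero M] {x y : ι → M}
    {ξ ξ' : ι → Bool} (hx : ∀ i, ξ' i = false → x i = 0) (hy : ∀ i, ξ' i = true → y i = 0)
    (h : ξ ≠ ξ') : ∏ i, (if ξ i then x i else y i) = 0 := by
  obtain ⟨i, hi⟩ := Function.ne_iff.mp h
  refine Finset.prod_eq_zero (Finset.mem_univ i) ?_
  cases hξ : ξ i <;> cases hξ' : ξ' i <;> simp_all

theorem pfslda_constrained_log_likelihood_lower_bound_general
    (K N : ℕ)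
    (μ : Measure (stdSimplex ℝ (Fin K))) [IsProbabilityMeasure μ]
    (p : ℝ) (hp : p ∈ Set.Ioo (0 : ℝ) 1)
    (a : Fin N → stdSimplex ℝ (Fin K) → ℝ)
    (b : Fin N → ℝ)
    (ξstar : Fin N → Bool)
    (htrue : ∀ n, ξstar n = true →
      b n = 0 ∧ Continuous (a n) ∧ ∀ θ, 0 < a n θ)
    (hfalse : ∀ n, ξstar n = false →
      0 < b n ∧ ∀ θ, a n θ = 0)
    (r : (Fin N → Bool) → ℝ) (hr_star : 0 < r ξstar)
    (q : (Fin N → Bool) → ℝ)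
    (hq : ∀ ξ, q ξ = ∏ n, (if ξ n then p else 1 - p))
    (L₀ : (Fin N → Bool) → ℝ)
    (hL₀ : ∀ ξ, L₀ ξ = ∫ θ, ∏ n, (if ξ n then a n θ else b n) ∂μ) :
    (∑ ξ : Fin N → Bool, q ξ * r ξ * L₀ ξ) = q ξstar * r ξstar * L₀ ξstar ∧
      Real.log (∑ ξ : Fin N → Bool, q ξ * r ξ * L₀ ξ) ≥
        Real.log (r ξstar) +
          (∑ n ∈ Finset.univ.filter (fun n => ξstar n = true),
            ∫ θ, Real.log (a n θ) ∂μ) +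
          (∑ n ∈ Finset.univ.filter (fun n => ξstar n = false),
            Real.log (b n)) +
          Real.log (q ξstar) := by
  have hcollapse : ∑ ξ, q ξ * r ξ * L₀ ξ = q ξstar * r ξstar * L₀ ξstar := by
    refine Finset.sum_eq_single_of_mem ξstar (Finset.mem_univ _) fun ξ _ hne => ?_
    have hzero : ∀ θ, ∏ n, (if ξ n then a n θ else b n) = 0 := fun θ =>
      prod_ite_eq_zero_of_ne (fun n hn => (hfalse n hn).2 θ) (fun n hn => (htrue n hn).1) hne
    simp only [hL₀, hzero, integral_zero, mul_zero]
  refine ⟨hcollapse, ?_⟩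
  set S := Finset.univ.filter fun n => ξstar n = true
  set T := Finset.univ.filter fun n => ξstar n = false
  have hS : ∀ n ∈ S, ξstar n = true := fun n hn => (Finset.mem_filter.mp hn).2
  have hT : ∀ n ∈ T, ξstar n = false := fun n hn => (Finset.mem_filter.mp hn).2
  have hL₀_star : L₀ ξstar = (∫ θ, ∏ n ∈ S, a n θ ∂μ) * ∏ n ∈ T, b n := by
    simp_rw [hL₀, Finset.prod_ite, Bool.not_eq_true]
    exact integral_mul_const _ _
  have hq_pos : 0 < q ξstar := hq ξstar ▸ Finset.prod_pos fun n _ => by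
    split <;> linarith [hp.1, hp.2]
  have hint_pos : 0 < ∫ θ, ∏ n ∈ S, a n θ ∂μ :=
    (continuous_finsetProd S fun n hn => (htrue n (hS n hn)).2.1).integral_pos_of_forall_pos
      fun θ => Finset.prod_pos fun n hn => (htrue n (hS n hn)).2.2 θ
  have hb_pos : 0 < ∏ n ∈ T, b n := Finset.prod_pos fun n hn => (hfalse n (hT n hn)).1
  have hjensen : ∑ n ∈ S, ∫ θ, log (a n θ) ∂μ ≤ log (∫ θ, ∏ n ∈ S, a n θ ∂μ) :=
    sum_integral_log_le_log_integral_prod_s9 (fun n hn => (htrue n (hS n hn)).2.1)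
      fun n hn => (htrue n (hS n hn)).2.2
  rw [hcollapse, hL₀_star, log_mul (by positivity) (by positivity),
    log_mul hq_pos.ne' hr_star.ne', log_mul hint_pos.ne' hb_pos.ne',
    log_prod fun n hn => (hfalse n (hT n hn)).1.ne']
  linarith

/-- The tighter lower bound on the log likelihood from Appendix C of the
pf-sLDA paper, on the constrained parameter space `β⊤π = 0`: when the channels
are disjoint relative to `ξ*`, the joint likelihood collapses to the single
configuration `ξ*` and satisfies
`log p(y,w) ≥ log r(ξ*) + ∑_{n: ξ*n} ∫ log a_n dμ + ∑_{n: ¬ξ*n} log b_n + log q(ξ*)`. -/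
theorem pfslda_constrained_log_likelihood_lower_bound
    (K N : ℕ)
    (μ : Measure (stdSimplex ℝ (Fin K))) [IsProbabilityMeasure μ]
    (p : ℝ) (hp : p ∈ Set.Ioo (0 : ℝ) 1)
    (a : Fin N → stdSimplex ℝ (Fin K) → ℝ)
    (b : Fin N → ℝ)
    (ξstar : Fin N → Bool)
    (htrue : ∀ n, ξstar n = true →
      b n = 0 ∧ Continuous (a n) ∧ ∀ θ, 0 < a n θ)
    (hfalse : ∀ n, ξstar n = false →
      0 < b n ∧ ∀ θ, a n θ = 0)
    (r : (Fin N → Bool) → ℝ) (hr_nn : ∀ ξ, 0 ≤ r ξ) (hr_star : 0 < r ξstar)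
    (q : (Fin N → Bool) → ℝ)
    (hq : ∀ ξ, q ξ = ∏ n, (if ξ n then p else 1 - p))
    (L₀ : (Fin N → Bool) → ℝ)
    (hL₀ : ∀ ξ, L₀ ξ = ∫ θ, ∏ n, (if ξ n then a n θ else b n) ∂μ) :
    (∑ ξ : Fin N → Bool, q ξ * r ξ * L₀ ξ) = q ξstar * r ξstar * L₀ ξstar ∧
      Real.log (∑ ξ : Fin N → Bool, q ξ * r ξ * L₀ ξ) ≥
        Real.log (r ξstar) +
          (∑ n ∈ Finset.univ.filter (fun n => ξstar n = true),
            ∫ θ, Real.log (a n θ) ∂μ) +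
          (∑ n ∈ Finset.univ.filter (fun n => ξstar n = false),
            Real.log (b n)) +
          Real.log (q ξstar) :=
  pfslda_constrained_log_likelihood_lower_bound_general K N μ p hp a b ξstar htrue hfalse r hr_star
    q hq L₀ hL₀
end
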